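/- Let T1, T2 be bounded linear operators on H with A-adjoints S1 = T1^{#_A}, S2 = T2^{#_A} (i.e. A∘S_i = T_i*∘A and range(S_i) ⊆ closure(range A)). Then min(‖T1+T2‖_A², ‖T1-T2‖_A²) ≥ max(‖T1² + T2²‖_A, ‖S1∘T1 + S2∘T2‖_A, ‖T1∘S1 + T2∘S2‖_A) - |‖T1+T2‖_A² - ‖T1-T2‖_A²| / 2. -/

import Mathlib

/-!
With `T± = T1 ± T2` and their `A`-adjoints `S± = S1 ± S2`, twice the three operators are
`T₊T₊ + T₋T₋`, `S₊T₊ + S₋T₋` and `T₊S₊ + T₋S₋`. As `‖XY‖_A ≤ ‖X‖_A ‖Y‖_A` and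
`‖S±‖_A ≤ ‖T±‖_A`, each has `A`-seminorm at most `(‖T₊‖_A² + ‖T₋‖_A²) / 2`, which is the
minimum plus half the distance.

The analytic content is `‖Tx‖_A ≤ ‖T‖_A ‖x‖_A` for all `x` (in particular `‖T‖_A` is a genuine
supremum). For `R` with `A R = R* A`, Cauchy–Schwarz gives `‖Rx‖_A² ≤ ‖R²x‖_A ‖x‖_A`; iterating
this along `R ^ 2 ^ n` yields `‖Rx‖_A ≤ ‖R‖ ‖x‖_A`. Applied to `R = S T` it bounds `T`, since
`‖Tx‖_A² ≤ ‖STx‖_A ‖x‖_A`.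
-/

open scoped InnerProductSpace
open ContinuousLinearMap

variable {H : Type*} [NormedAddCommGroup H] [InnerProductSpace ℂ H] [CompleteSpace H]

/-- The `A`-seminorm `‖x‖_A = √⟨Ax,x⟩`. -/
noncomputable def aNorm (A : H →L[ℂ] H) (x : H) : ℝ :=
  Real.sqrt (⟪A x, x⟫_ℂ).re

/-- The `A`-numerical radius `w_A(T) = sup {|⟨ATx,x⟩| : x ∈ H, ‖x‖_A = 1}`. -/
noncomputable def wA (A T : H →L[ℂ] H) : ℝ :=
  sSup {r : ℝ | ∃ x : H, aNorm A x = 1 ∧ r = ‖⟪A (T x), x⟫_ℂ‖}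

/-- The `A`-operator seminorm `‖T‖_A = sup {‖Tx‖_A : x ∈ closure (range A), ‖x‖_A = 1}`. -/
noncomputable def aOpNorm (A T : H →L[ℂ] H) : ℝ :=
  sSup {r : ℝ | ∃ x : H, x ∈ closure (Set.range (⇑A)) ∧ aNorm A x = 1 ∧ r = aNorm A (T x)}

/-- The `B`-numerical radius of the operator matrix `[[T1,T2],[T3,T4]]` acting on `H ⊕ H` by
`(x, y) ↦ (T1 x + T2 y, T3 x + T4 y)`, where `B = [[A,0],[0,A]]`:
`w_B(T) = sup {|⟨BTz,z⟩| : z ∈ H ⊕ H, ‖z‖_B = 1}`. -/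
noncomputable def wB (A T1 T2 T3 T4 : H →L[ℂ] H) : ℝ :=
  sSup {r : ℝ | ∃ x y : H, Real.sqrt ((⟪A x, x⟫_ℂ).re + (⟪A y, y⟫_ℂ).re) = 1 ∧
    r = ‖⟪A (T1 x + T2 y), x⟫_ℂ + ⟪A (T3 x + T4 y), y⟫_ℂ‖}

lemma le_of_forall_pow_two_pow_le {t q C : ℝ} (hq : 0 ≤ q)
    (h : ∀ n : ℕ, t ^ 2 ^ n ≤ C * q ^ 2 ^ n) : t ≤ q := by
  by_contra! hlt
  rcases hq.eq_or_lt with rfl | hq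
  · linarith [show t ≤ 0 by simpa using h 0]
  have hr : 1 < t / q := (one_lt_div hq).mpr hlt
  obtain ⟨n, hn⟩ := pow_unbounded_of_one_lt C hr
  have hC : (t / q) ^ 2 ^ n ≤ C := by
    rw [div_pow, div_le_iff₀ (by positivity)]
    exact h n
  exact (hn.trans_le (pow_le_pow_right₀ hr.le Nat.lt_two_pow_self.le)).not_ge hC

lemma min_add_abs_sub_div_two (x y : ℝ) : min x y + |x - y| / 2 = (x + y) / 2 := by
  rcases le_total x y with h | h
  · rw [min_eq_left h, abs_of_nonpos (sub_nonpos.mpr h)]; ring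
  · rw [min_eq_right h, abs_of_nonneg (sub_nonneg.mpr h)]; ring

section ASeminorm

variable {E : Type*} [NormedAddCommGroup E] [InnerProductSpace ℂ E] {A : E →L[ℂ] E}

lemma aNorm_nonneg (x : E) : 0 ≤ aNorm A x := Real.sqrt_nonneg _

lemma aNorm_sq (hA : A.IsPositive) (x : E) : aNorm A x ^ 2 = (⟪A x, x⟫_ℂ).re :=
  Real.sq_sqrt (hA.re_inner_nonneg_left x)

lemma aNorm_smul (c : ℂ) (x : E) : aNorm A (c • x) = ‖c‖ * aNorm A x := by
  rw [aNorm, aNorm, map_smul, inner_smul_left, inner_smul_right, ← mul_assoc,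
    Complex.conj_mul', ← Complex.ofReal_pow, Complex.re_ofReal_mul,
    Real.sqrt_mul (sq_nonneg _), Real.sqrt_sq (norm_nonneg _)]

lemma aNorm_le_sqrt_norm_mul_norm (x : E) : aNorm A x ≤ √‖A‖ * ‖x‖ := by
  rw [aNorm, ← Real.sqrt_sq (norm_nonneg x), ← Real.sqrt_mul (norm_nonneg _)]
  refine Real.sqrt_le_sqrt ((Complex.re_le_norm _).trans ((norm_inner_le_norm _ _).trans ?_))
  rw [sq, ← mul_assoc]
  exact mul_le_mul_of_nonneg_right (A.le_opNorm x) (norm_nonneg x)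

lemma aOpNorm_nonneg (T : E →L[ℂ] E) : 0 ≤ aOpNorm A T :=
  Real.sSup_nonneg fun _ ⟨_, _, _, hr⟩ ↦ hr ▸ aNorm_nonneg _

lemma aOpNorm_le {T : E →L[ℂ] E} {c : ℝ} (hc : 0 ≤ c)
    (h : ∀ x ∈ closure (Set.range A), aNorm A x = 1 → aNorm A (T x) ≤ c) :
    aOpNorm A T ≤ c :=
  Real.sSup_le (fun _ ⟨x, hx, h1, hr⟩ ↦ hr ▸ h x hx h1) hc

lemma aNorm_apply_le_mul_of_normalized {K : Submodule ℂ E} {T : E →L[ℂ] E} {c : ℝ}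
    (h1 : ∀ x ∈ K, aNorm A x = 1 → aNorm A (T x) ≤ c)
    (h0 : ∀ x ∈ K, aNorm A x = 0 → aNorm A (T x) = 0) {x : E} (hx : x ∈ K) :
    aNorm A (T x) ≤ c * aNorm A x := by
  rcases (aNorm_nonneg (A := A) x).eq_or_lt with h | h
  · rw [h0 x hx h.symm, ← h, mul_zero]
  have hnorm : ‖((aNorm A x)⁻¹ : ℂ)‖ = (aNorm A x)⁻¹ := by
    rw [norm_inv, Complex.norm_real, Real.norm_of_nonneg h.le]
  have := h1 _ (K.smul_mem ((aNorm A x)⁻¹ : ℂ) hx)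
    (by rw [aNorm_smul, hnorm, inv_mul_cancel₀ h.ne'])
  rw [map_smul, aNorm_smul, hnorm, inv_mul_le_iff₀ h] at this
  linarith

end ASeminorm

section Positive

variable {A : H →L[ℂ] H} (hA : A.IsPositive)
include hA

lemma inner_apply_eq_inner_sqrt (x y : H) :
    ⟪A x, y⟫_ℂ = ⟪CFC.sqrt A x, CFC.sqrt A y⟫_ℂ := by
  have hA0 : 0 ≤ A := (nonneg_iff_isPositive A).mpr hA
  conv_lhs => rw [← CFC.sqrt_mul_sqrt_self A hA0, mul_apply_eq_comp]
  rw [← adjoint_inner_right, (IsSelfAdjoint.of_nonneg (CFC.sqrt_nonneg A)).adjoint_eq]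

lemma aNorm_eq_norm_sqrt (x : H) : aNorm A x = ‖CFC.sqrt A x‖ := by
  rw [aNorm, inner_apply_eq_inner_sqrt hA]
  exact (congrArg Real.sqrt (inner_self_eq_norm_sq (𝕜 := ℂ) (CFC.sqrt A x))).trans
    (Real.sqrt_sq (norm_nonneg _))

lemma re_inner_le_aNorm_mul_aNorm (x y : H) : (⟪A x, y⟫_ℂ).re ≤ aNorm A x * aNorm A y := by
  rw [inner_apply_eq_inner_sqrt hA, aNorm_eq_norm_sqrt hA, aNorm_eq_norm_sqrt hA]
  exact (Complex.re_le_norm _).trans (norm_inner_le_norm _ _)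

lemma aNorm_add_le (x y : H) : aNorm A (x + y) ≤ aNorm A x + aNorm A y := by
  simp only [aNorm_eq_norm_sqrt hA, map_add]
  exact norm_add_le _ _

lemma aNorm_add_of_aNorm_eq_zero {x z : H} (hz : aNorm A z = 0) :
    aNorm A (x + z) = aNorm A x := by
  rw [aNorm_eq_norm_sqrt hA, norm_eq_zero] at hz
  rw [aNorm_eq_norm_sqrt hA, aNorm_eq_norm_sqrt hA, map_add, hz, add_zero]

end Positive

/-- `W` is an `A`-adjoint of `U`, without the range condition `range W ⊆ closure (range A)`. -/
def IsAAdjoint (A U W : H →L[ℂ] H) : Prop :=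
  A ∘L W = adjoint U ∘L A

namespace IsAAdjoint

variable {A U W U' W' : H →L[ℂ] H}

lemma apply (h : IsAAdjoint A U W) (x : H) : A (W x) = adjoint U (A x) :=
  DFunLike.congr_fun h x

lemma inner_apply_right (h : IsAAdjoint A U W) (x y : H) :
    ⟪A x, U y⟫_ℂ = ⟪A (W x), y⟫_ℂ := by
  rw [h.apply, adjoint_inner_left]

lemma symm (hA : IsSelfAdjoint A) (h : IsAAdjoint A U W) : IsAAdjoint A W U := by
  have := congrArg adjoint h
  rwa [adjoint_comp, adjoint_comp, adjoint_adjoint, hA.adjoint_eq, eq_comm] at this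

lemma add (h : IsAAdjoint A U W) (h' : IsAAdjoint A U' W') :
    IsAAdjoint A (U + U') (W + W') := by
  rw [IsAAdjoint, comp_add, h, h', map_add, add_comp]

lemma sub (h : IsAAdjoint A U W) (h' : IsAAdjoint A U' W') :
    IsAAdjoint A (U - U') (W - W') := by
  rw [IsAAdjoint, comp_sub, h, h', map_sub, sub_comp]

lemma comp (h : IsAAdjoint A U W) (h' : IsAAdjoint A U' W') :
    IsAAdjoint A (U ∘L U') (W' ∘L W) := by
  rw [IsAAdjoint, adjoint_comp, ← comp_assoc, h', comp_assoc, h, comp_assoc]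

lemma pow {R : H →L[ℂ] H} (h : IsAAdjoint A R R) (k : ℕ) : IsAAdjoint A (R ^ k) (R ^ k) := by
  induction k with
  | zero => simp [IsAAdjoint, ← star_eq_adjoint, ← mul_def]
  | succ k ih =>
    have := ih.comp h
    rwa [← mul_def, ← mul_def, ← pow_succ, ← pow_succ'] at this

lemma aNorm_apply_sq_le (hA : A.IsPositive) (h : IsAAdjoint A U W) (x : H) :
    aNorm A (U x) ^ 2 ≤ aNorm A (W (U x)) * aNorm A x := by
  rw [aNorm_sq hA, h.inner_apply_right]
  exact re_inner_le_aNorm_mul_aNorm hA _ _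

lemma aNorm_apply_eq_zero (hA : A.IsPositive) (h : IsAAdjoint A U W) {x : H}
    (hx : aNorm A x = 0) : aNorm A (U x) = 0 := by
  have := h.aNorm_apply_sq_le hA x
  rw [hx, mul_zero] at this
  exact pow_eq_zero_iff two_ne_zero |>.mp (le_antisymm this (sq_nonneg _))

lemma aNorm_apply_le_opNorm_mul (hA : A.IsPositive) {R : H →L[ℂ] H} (hR : IsAAdjoint A R R)
    (x : H) : aNorm A (R x) ≤ ‖R‖ * aNorm A x := by
  refine aNorm_apply_le_mul_of_normalized (K := ⊤) (fun y _ hy ↦ ?_)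
    (fun z _ hz ↦ hR.aNorm_apply_eq_zero hA hz) trivial
  have hpow (n : ℕ) : aNorm A (R y) ^ 2 ^ n ≤ aNorm A ((R ^ 2 ^ n) y) := by
    induction n with
    | zero => simp
    | succ n ih =>
      calc aNorm A (R y) ^ 2 ^ (n + 1) = (aNorm A (R y) ^ 2 ^ n) ^ 2 := by ring
        _ ≤ aNorm A ((R ^ 2 ^ n) y) ^ 2 := by gcongr; exact pow_nonneg (aNorm_nonneg _) _
        _ ≤ aNorm A ((R ^ 2 ^ n) ((R ^ 2 ^ n) y)) * aNorm A y :=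
          (hR.pow (2 ^ n)).aNorm_apply_sq_le hA y
        _ = aNorm A ((R ^ 2 ^ (n + 1)) y) := by
          rw [hy, mul_one, pow_succ, mul_two, pow_add, mul_apply_eq_comp]
  refine le_of_forall_pow_two_pow_le (norm_nonneg R) (C := √‖A‖ * ‖y‖) fun n ↦ ?_
  calc aNorm A (R y) ^ 2 ^ n ≤ aNorm A ((R ^ 2 ^ n) y) := hpow n
    _ ≤ √‖A‖ * ‖(R ^ 2 ^ n) y‖ := aNorm_le_sqrt_norm_mul_norm _
    _ ≤ √‖A‖ * (‖R‖ ^ 2 ^ n * ‖y‖) := by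
      gcongr
      exact (le_opNorm _ _).trans (by gcongr; exact norm_pow_le' R (by positivity))
    _ = √‖A‖ * ‖y‖ * ‖R‖ ^ 2 ^ n := by ring

lemma aNorm_apply_le_sqrt_mul (hA : A.IsPositive) (h : IsAAdjoint A U W) (x : H) :
    aNorm A (U x) ≤ √‖W ∘L U‖ * aNorm A x := by
  have hWU : IsAAdjoint A (W ∘L U) (W ∘L U) := (h.symm hA.isSelfAdjoint).comp h
  have hsq : aNorm A (U x) ^ 2 ≤ ‖W ∘L U‖ * aNorm A x ^ 2 := by
    calc aNorm A (U x) ^ 2 ≤ aNorm A ((W ∘L U) x) * aNorm A x := h.aNorm_apply_sq_le hA x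
      _ ≤ ‖W ∘L U‖ * aNorm A x * aNorm A x := by
        gcongr
        · exact aNorm_nonneg _
        · exact hWU.aNorm_apply_le_opNorm_mul hA x
      _ = ‖W ∘L U‖ * aNorm A x ^ 2 := by ring
  rw [← Real.sqrt_sq (aNorm_nonneg (U x)), ← Real.sqrt_sq (aNorm_nonneg x),
    ← Real.sqrt_mul (norm_nonneg _)]
  exact Real.sqrt_le_sqrt hsq

lemma aNorm_apply_le_aOpNorm (hA : A.IsPositive) (h : IsAAdjoint A U W) {x : H}
    (hx : x ∈ closure (Set.range A)) (hx1 : aNorm A x = 1) : aNorm A (U x) ≤ aOpNorm A U := by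
  refine le_csSup ⟨√‖W ∘L U‖, ?_⟩ ⟨x, hx, hx1, rfl⟩
  rintro _ ⟨y, -, hy1, rfl⟩
  simpa [hy1] using h.aNorm_apply_le_sqrt_mul hA y

/-- Vectors orthogonal to `range A` have zero `A`-seminorm, so the supremum over the unit sphere
of `closure (range A)` controls `U` everywhere. -/
lemma aNorm_apply_le_aOpNorm_mul (hA : A.IsPositive) (h : IsAAdjoint A U W) (x : H) :
    aNorm A (U x) ≤ aOpNorm A U * aNorm A x := by
  set K := (LinearMap.range (A : H →ₗ[ℂ] H)).topologicalClosure
  have hK : (K : Set H) = closure (Set.range A) := by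
    rw [Submodule.topologicalClosure_coe, LinearMap.coe_range]; rfl
  obtain ⟨p, hp, z, hz, rfl⟩ := K.exists_add_mem_mem_orthogonal x
  have hz0 : aNorm A z = 0 := by
    have hAz : A z ∈ K := Submodule.le_topologicalClosure _ (LinearMap.mem_range_self _ z)
    rw [← sq_eq_zero_iff, aNorm_sq hA, K.inner_right_of_mem_orthogonal hAz hz, Complex.zero_re]
  rw [map_add, aNorm_add_of_aNorm_eq_zero hA (h.aNorm_apply_eq_zero hA hz0),
    aNorm_add_of_aNorm_eq_zero hA hz0]
  exact aNorm_apply_le_mul_of_normalized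
    (fun y hy hy1 ↦ h.aNorm_apply_le_aOpNorm hA (hK ▸ hy) hy1)
    (fun y _ hy0 ↦ h.aNorm_apply_eq_zero hA hy0) hp

lemma aOpNorm_le_aOpNorm (hA : A.IsPositive) (h : IsAAdjoint A U W) :
    aOpNorm A W ≤ aOpNorm A U := by
  refine aOpNorm_le (aOpNorm_nonneg U) fun x _ hx1 ↦ ?_
  have hsq : aNorm A (W x) ^ 2 ≤ aOpNorm A U * aNorm A (W x) := by
    calc aNorm A (W x) ^ 2 ≤ aNorm A (U (W x)) * aNorm A x :=
          (h.symm hA.isSelfAdjoint).aNorm_apply_sq_le hA x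
      _ ≤ aOpNorm A U * aNorm A (W x) := by
        rw [hx1, mul_one]; exact h.aNorm_apply_le_aOpNorm_mul hA _
  nlinarith [aNorm_nonneg (A := A) (W x), aOpNorm_nonneg (A := A) U]

lemma aNorm_comp_apply_le {X Y X' Y' : H →L[ℂ] H} (hA : A.IsPositive)
    (hX : IsAAdjoint A X X') (hY : IsAAdjoint A Y Y') (x : H) :
    aNorm A (X (Y x)) ≤ aOpNorm A X * aOpNorm A Y * aNorm A x := by
  calc aNorm A (X (Y x)) ≤ aOpNorm A X * aNorm A (Y x) := hX.aNorm_apply_le_aOpNorm_mul hA _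
    _ ≤ aOpNorm A X * (aOpNorm A Y * aNorm A x) := by
      gcongr
      · exact aOpNorm_nonneg X
      · exact hY.aNorm_apply_le_aOpNorm_mul hA x
    _ = aOpNorm A X * aOpNorm A Y * aNorm A x := by ring

end IsAAdjoint

lemma aOpNorm_le_of_add_self_eq {A V X₁ Y₁ X₂ Y₂ X₁' Y₁' X₂' Y₂' : H →L[ℂ] H}
    (hA : A.IsPositive) (hX₁ : IsAAdjoint A X₁ X₁') (hY₁ : IsAAdjoint A Y₁ Y₁')
    (hX₂ : IsAAdjoint A X₂ X₂') (hY₂ : IsAAdjoint A Y₂ Y₂')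
    (hV : V + V = X₁ ∘L Y₁ + X₂ ∘L Y₂) :
    aOpNorm A V ≤ (aOpNorm A X₁ * aOpNorm A Y₁ + aOpNorm A X₂ * aOpNorm A Y₂) / 2 := by
  have hc : 0 ≤ aOpNorm A X₁ * aOpNorm A Y₁ + aOpNorm A X₂ * aOpNorm A Y₂ :=
    add_nonneg (mul_nonneg (aOpNorm_nonneg _) (aOpNorm_nonneg _))
      (mul_nonneg (aOpNorm_nonneg _) (aOpNorm_nonneg _))
  refine aOpNorm_le (by positivity) fun x _ hx1 ↦ ?_
  have htwo : aNorm A (V x + V x) = 2 * aNorm A (V x) := by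
    rw [← two_smul ℂ, aNorm_smul]; norm_num
  have hsum : aNorm A (V x + V x) ≤ aOpNorm A X₁ * aOpNorm A Y₁ + aOpNorm A X₂ * aOpNorm A Y₂ :=
    calc aNorm A (V x + V x) = aNorm A (X₁ (Y₁ x) + X₂ (Y₂ x)) := by
          rw [← add_apply, hV]; rfl
      _ ≤ aNorm A (X₁ (Y₁ x)) + aNorm A (X₂ (Y₂ x)) := aNorm_add_le hA _ _
      _ ≤ aOpNorm A X₁ * aOpNorm A Y₁ + aOpNorm A X₂ * aOpNorm A Y₂ := by
        simpa [hx1] using add_le_add (hX₁.aNorm_comp_apply_le hA hY₁ x)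
          (hX₂.aNorm_comp_apply_le hA hY₂ x)
  linarith

theorem stmt11_general (A T1 T2 S1 S2 : H →L[ℂ] H) (hA : A.IsPositive)
    (hS1 : A ∘L S1 = (ContinuousLinearMap.adjoint T1) ∘L A)
    (hS2 : A ∘L S2 = (ContinuousLinearMap.adjoint T2) ∘L A) :
    min ((aOpNorm A (T1 + T2)) ^ 2) ((aOpNorm A (T1 - T2)) ^ 2) ≥
      max (aOpNorm A (T1 ∘L T1 + T2 ∘L T2))
          (max (aOpNorm A (S1 ∘L T1 + S2 ∘L T2)) (aOpNorm A (T1 ∘L S1 + T2 ∘L S2))) -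
        |(aOpNorm A (T1 + T2)) ^ 2 - (aOpNorm A (T1 - T2)) ^ 2| / 2 := by
  have hadd : IsAAdjoint A (T1 + T2) (S1 + S2) := IsAAdjoint.add hS1 hS2
  have hsub : IsAAdjoint A (T1 - T2) (S1 - S2) := IsAAdjoint.sub hS1 hS2
  have hadd' := hadd.symm hA.isSelfAdjoint
  have hsub' := hsub.symm hA.isSelfAdjoint
  set a := aOpNorm A (T1 + T2)
  set b := aOpNorm A (T1 - T2)
  have ha : 0 ≤ a := aOpNorm_nonneg _
  have hb : 0 ≤ b := aOpNorm_nonneg _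
  have hSadd : aOpNorm A (S1 + S2) ≤ a := hadd.aOpNorm_le_aOpNorm hA
  have hSsub : aOpNorm A (S1 - S2) ≤ b := hsub.aOpNorm_le_aOpNorm hA
  have hTT : aOpNorm A (T1 ∘L T1 + T2 ∘L T2) ≤ (a * a + b * b) / 2 :=
    aOpNorm_le_of_add_self_eq hA hadd hadd hsub hsub (by
      simp only [add_comp, comp_add, sub_comp, comp_sub]; abel)
  have hST : aOpNorm A (S1 ∘L T1 + S2 ∘L T2) ≤ (a * a + b * b) / 2 := by
    refine (aOpNorm_le_of_add_self_eq hA hadd' hadd hsub' hsub ?_).trans (by gcongr)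
    simp only [add_comp, comp_add, sub_comp, comp_sub]; abel
  have hTS : aOpNorm A (T1 ∘L S1 + T2 ∘L S2) ≤ (a * a + b * b) / 2 := by
    refine (aOpNorm_le_of_add_self_eq hA hadd hadd' hsub hsub' ?_).trans (by gcongr)
    simp only [add_comp, comp_add, sub_comp, comp_sub]; abel
  rw [ge_iff_le, sub_le_iff_le_add, min_add_abs_sub_div_two, sq, sq]
  exact max_le hTT (max_le hST hTS)

theorem stmt11 (A T1 T2 S1 S2 : H →L[ℂ] H) (hA : A.IsPositive)
    (hS1 : A ∘L S1 = (ContinuousLinearMap.adjoint T1) ∘L A)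
    (hS1r : Set.range (⇑S1) ⊆ closure (Set.range (⇑A)))
    (hS2 : A ∘L S2 = (ContinuousLinearMap.adjoint T2) ∘L A)
    (hS2r : Set.range (⇑S2) ⊆ closure (Set.range (⇑A))) :
    min ((aOpNorm A (T1 + T2)) ^ 2) ((aOpNorm A (T1 - T2)) ^ 2) ≥
      max (aOpNorm A (T1 ∘L T1 + T2 ∘L T2))
          (max (aOpNorm A (S1 ∘L T1 + S2 ∘L T2)) (aOpNorm A (T1 ∘L S1 + T2 ∘L S2))) -
        |(aOpNorm A (T1 + T2)) ^ 2 - (aOpNorm A (T1 - T2)) ^ 2| / 2 :=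
  stmt11_general A T1 T2 S1 S2 hA hS1 hS2
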